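/- Let L be a first-order language and consider a predicate extension determined by distinct relation symbols p_0,…,p_{k-1} of arities n_0,…,n_{k-1} and positive formulas F_0,…,F_{k-1}, where the free variables of F_j are among x_{j,0},…,x_{j,n_j-1}. Let (I_t)_{t∈T} be a nonempty family of L-structures on the same domain D, all agreeing on the interpretations of the function symbols and of all relation symbols other than p_0,…,p_{k-1}, each of which is a model of the predicate extension. Then the structure I (agreeing with them except on the p_j) defined by I(p_j) = ⋂_{t∈T} I_t(p_j) for each j is also a model of the predicate extension. -/
import Mathlib


open FirstOrder Language

/-- A positive formula: one built from atomic formulas using only conjunction,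
disjunction and existential quantification. -/
inductive FirstOrder.Language.BoundedFormula.IsPositive {L : Language} {α : Type*} :
    {n : ℕ} → L.BoundedFormula α n → Prop
  | equal {n : ℕ} (t₁ t₂ : L.Term (α ⊕ Fin n)) : IsPositive (BoundedFormula.equal t₁ t₂)
  | rel {n l : ℕ} (R : L.Relations l) (ts : Fin l → L.Term (α ⊕ Fin n)) :
      IsPositive (BoundedFormula.rel R ts)
  | inf {n : ℕ} {φ ψ : L.BoundedFormula α n} (hφ : IsPositive φ) (hψ : IsPositive ψ) :
      IsPositive (φ ⊓ ψ)
  | sup {n : ℕ} {φ ψ : L.BoundedFormula α n} (hφ : IsPositive φ) (hψ : IsPositive ψ) :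
      IsPositive (φ ⊔ ψ)
  | ex {n : ℕ} {φ : L.BoundedFormula α (n + 1)} (hφ : IsPositive φ) : IsPositive φ.ex


theorem term_realize_congr {L : Language} {D : Type*} (I J : L.Structure D)
    (hfun : ∀ (m : ℕ) (f : L.Functions m) (v : Fin m → D),
      @Structure.funMap L D I m f v = @Structure.funMap L D J m f v)
    {α : Type*} (t : L.Term α) (v : α → D) :
    @Term.realize L D I α v t = @Term.realize L D J α v t := by
  induction t with
  | var => rfl
  | func f ts ih =>
      show @Structure.funMap L D I _ f (fun i => @Term.realize L D I α v (ts i)) =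
        @Structure.funMap L D J _ f (fun i => @Term.realize L D J α v (ts i))
      rw [hfun]
      congr 1
      funext i
      exact ih i

theorem pos_realize_mono {L : Language} {D : Type*} (I J : L.Structure D)
    (hfun : ∀ (m : ℕ) (f : L.Functions m) (v : Fin m → D),
      @Structure.funMap L D I m f v = @Structure.funMap L D J m f v)
    (hrel : ∀ (m : ℕ) (r : L.Relations m) (v : Fin m → D),
      @Structure.RelMap L D I m r v → @Structure.RelMap L D J m r v)
    {α : Type*} {m : ℕ} {φ : L.BoundedFormula α m} (hφ : φ.IsPositive)
    (v : α → D) :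
    ∀ xs : Fin m → D, @BoundedFormula.Realize L D I α m φ v xs →
      @BoundedFormula.Realize L D J α m φ v xs := by
  induction hφ with
  | equal t₁ t₂ =>
      intro xs h
      show @Term.realize L D J _ (Sum.elim v xs) t₁ = @Term.realize L D J _ (Sum.elim v xs) t₂
      have h' : @Term.realize L D I _ (Sum.elim v xs) t₁ = @Term.realize L D I _ (Sum.elim v xs) t₂ := h
      rw [← term_realize_congr I J hfun, ← term_realize_congr I J hfun]
      exact h'
  | rel R ts =>
      intro xs h
      show @Structure.RelMap L D J _ R (fun i => @Term.realize L D J _ (Sum.elim v xs) (ts i))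
      have h' : @Structure.RelMap L D I _ R (fun i => @Term.realize L D I _ (Sum.elim v xs) (ts i)) := h
      have : (fun i => @Term.realize L D J _ (Sum.elim v xs) (ts i)) =
          (fun i => @Term.realize L D I _ (Sum.elim v xs) (ts i)) := by
        funext i; exact (term_realize_congr I J hfun _ _).symm
      rw [this]
      exact hrel _ R _ h'
  | inf _ _ ih₁ ih₂ =>
      intro xs h
      rw [@BoundedFormula.realize_inf L D J α _ _ _ v xs]
      rw [@BoundedFormula.realize_inf L D I α _ _ _ v xs] at h
      exact ⟨ih₁ xs h.1, ih₂ xs h.2⟩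
  | sup _ _ ih₁ ih₂ =>
      intro xs h
      rw [@BoundedFormula.realize_sup L D J α _ _ _ v xs]
      rw [@BoundedFormula.realize_sup L D I α _ _ _ v xs] at h
      exact h.imp (ih₁ xs) (ih₂ xs)
  | ex _ ih =>
      intro xs h
      rw [@BoundedFormula.realize_ex L D J α _ _ v xs]
      rw [@BoundedFormula.realize_ex L D I α _ _ v xs] at h
      obtain ⟨a, ha⟩ := h
      exact ⟨a, ih _ ha⟩

/-- `I` is a model of the predicate extension given by relation symbols `p_j` and formulas
`F_j`: for every `j`, the set of `n_j`-tuples satisfying `F_j` in `I` is contained in the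
interpretation of `p_j` in `I`. -/
def IsModelOfExtension (L : Language) (D : Type*) {k : ℕ} {n : Fin k → ℕ}
    (p : ∀ j, L.Relations (n j)) (F : ∀ j, L.BoundedFormula Empty (n j))
    (I : L.Structure D) : Prop :=
  ∀ j, {d : Fin (n j) → D | @BoundedFormula.Realize L D I Empty (n j) (F j) Empty.elim d} ⊆
    {d : Fin (n j) → D | @Structure.RelMap L D I (n j) (p j) d}

/-- If `(I_t)_{t ∈ T}` is a nonempty family of models of a predicate extension on the same
domain, all agreeing on the function symbols and on all relation symbols other than the `p_j`,
then the structure `I` agreeing with them except on the `p_j` and interpreting each `p_j` as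
the intersection `⋂_{t ∈ T} I_t(p_j)` is also a model of the predicate extension. -/
theorem isModelOfExtension_iInter (L : Language) (D : Type*)
    {k : ℕ} (n : Fin k → ℕ) (p : ∀ j, L.Relations (n j))
    (hp : Function.Injective fun j => (⟨n j, p j⟩ : Σ m, L.Relations m))
    (F : ∀ j, L.BoundedFormula Empty (n j)) (hF : ∀ j, (F j).IsPositive)
    {T : Type*} [Nonempty T] (It : T → L.Structure D) (I : L.Structure D)
    (hfunT : ∀ (t t' : T) (m : ℕ) (f : L.Functions m) (v : Fin m → D),
      @Structure.funMap L D (It t) m f v = @Structure.funMap L D (It t') m f v)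
    (hrelT : ∀ (t t' : T) (m : ℕ) (r : L.Relations m),
      (∀ j, (⟨m, r⟩ : Σ m, L.Relations m) ≠ ⟨n j, p j⟩) →
      ∀ v : Fin m → D,
        (@Structure.RelMap L D (It t) m r v ↔ @Structure.RelMap L D (It t') m r v))
    (hfunI : ∀ (t : T) (m : ℕ) (f : L.Functions m) (v : Fin m → D),
      @Structure.funMap L D I m f v = @Structure.funMap L D (It t) m f v)
    (hrelI : ∀ (t : T) (m : ℕ) (r : L.Relations m),
      (∀ j, (⟨m, r⟩ : Σ m, L.Relations m) ≠ ⟨n j, p j⟩) →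
      ∀ v : Fin m → D, (@Structure.RelMap L D I m r v ↔ @Structure.RelMap L D (It t) m r v))
    (hpI : ∀ (j : Fin k) (v : Fin (n j) → D),
      @Structure.RelMap L D I (n j) (p j) v ↔ ∀ t : T, @Structure.RelMap L D (It t) (n j) (p j) v)
    (hmodel : ∀ t : T, IsModelOfExtension L D p F (It t)) :
    IsModelOfExtension L D p F I := by
  intro j d hd
  refine Set.mem_setOf_eq ▸ (hpI j d).mpr ?_
  intro t
  apply hmodel t j
  refine pos_realize_mono I (It t) (hfunI t) ?_ (hF j) Empty.elim d hd
  intro m r v hv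
  by_cases hcase : ∃ j', (⟨m, r⟩ : Σ m, L.Relations m) = ⟨n j', p j'⟩
  · obtain ⟨j', hj'⟩ := hcase
    obtain ⟨hm, hr⟩ := Sigma.mk.inj_iff.mp hj'
    subst hm
    rw [heq_eq_eq] at hr
    subst hr
    exact (hpI j' v).mp hv t
  · push_neg at hcase
    exact (hrelI t m r hcase v).mp hv
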